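/- Let n ≥ 2, k ≥ 1, and let x_1 ≤ … ≤ x_n and x_{n+1} be positive reals with k·x_{n+1} ≤ 2x_1 and (k−1)x_{n+1} < Σ_{i=1}^n x_i. Then k(Σ_{i=1}^n x_i − (k−1)x_{n+1})^n / ∏_{i=1}^n x_i ≥ k n^n ((Σ_{i=1}^n x_i − (k−1)x_{n+1}) / Σ_{i=1}^n x_i)^n, and the right-hand side is a strictly decreasing function of x_{n+1} (for k ≥ 2). -/

import Mathlib

/-!
AM–GM gives `n ^ n * ∏ xᵢ ≤ (∑ xᵢ) ^ n`, which is the inequality after clearing denominators;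
the monotonicity is that of `t ↦ t ^ n` on `[0, ∞)`, composed with the decreasing affine map
`y ↦ (S - (k - 1) y) / S`.
-/

open Finset

theorem Real.card_pow_mul_prod_le_sum_pow {ι : Type*} (s : Finset ι) (z : ι → ℝ)
    (hz : ∀ i ∈ s, 0 ≤ z i) : (#s : ℝ) ^ #s * ∏ i ∈ s, z i ≤ (∑ i ∈ s, z i) ^ #s := by
  rcases s.eq_empty_or_nonempty with rfl | hs
  · simp
  have hcard : (#s : ℝ) ≠ 0 := by exact_mod_cast hs.card_ne_zero
  have amgm : ∏ i ∈ s, z i ^ (#s : ℝ)⁻¹ ≤ (∑ i ∈ s, z i) / #s := by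
    simpa [← mul_sum, inv_mul_eq_div, sum_div] using
      geom_mean_le_arith_mean_weighted s (fun _ ↦ (#s : ℝ)⁻¹) z (fun _ _ ↦ by positivity)
        (by simp [hcard]) hz
  have hprod : (∏ i ∈ s, z i ^ (#s : ℝ)⁻¹) ^ #s = ∏ i ∈ s, z i := by
    rw [← prod_pow]
    refine prod_congr rfl fun i hi ↦ ?_
    rw [← rpow_natCast, ← rpow_mul (hz i hi), inv_mul_cancel₀ hcard, rpow_one]
  calc (#s : ℝ) ^ #s * ∏ i ∈ s, z i
      ≤ (#s : ℝ) ^ #s * ((∑ i ∈ s, z i) / #s) ^ #s := by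
        rw [← hprod]
        gcongr
        exact prod_nonneg fun i hi ↦ rpow_nonneg (hz i hi) _
    _ = (∑ i ∈ s, z i) ^ #s := by rw [← mul_pow, mul_div_cancel₀ _ hcard]

theorem mul_card_pow_mul_div_sum_pow_le_div_prod {ι : Type*} (s : Finset ι) (z : ι → ℝ)
    (hz : ∀ i ∈ s, 0 < z i) {c T : ℝ} (hc : 0 ≤ c) (hT : 0 ≤ T) :
    c * (#s : ℝ) ^ #s * (T / ∑ i ∈ s, z i) ^ #s ≤ c * T ^ #s / ∏ i ∈ s, z i := by
  rcases s.eq_empty_or_nonempty with rfl | hs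
  · simp
  have hS : 0 < ∑ i ∈ s, z i := sum_pos hz hs
  have hP : 0 < ∏ i ∈ s, z i := prod_pos hz
  have amgm := Real.card_pow_mul_prod_le_sum_pow s z fun i hi ↦ (hz i hi).le
  rw [div_pow, mul_div_assoc, mul_assoc]
  gcongr c * ?_
  rw [mul_div_assoc', div_le_div_iff₀ (by positivity) hP]
  calc (#s : ℝ) ^ #s * T ^ #s * ∏ i ∈ s, z i = T ^ #s * ((#s : ℝ) ^ #s * ∏ i ∈ s, z i) := by ring
    _ ≤ T ^ #s * (∑ i ∈ s, z i) ^ #s := by gcongr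

theorem strictAntiOn_mul_sub_mul_div_pow {c a S : ℝ} (hc : 0 < c) (ha : 0 < a) (hS : 0 < S)
    {n : ℕ} (hn : n ≠ 0) :
    StrictAntiOn (fun y ↦ c * ((S - a * y) / S) ^ n) {y | a * y ≤ S} := by
  intro y _ y' (hy' : a * y' ≤ S) hlt
  dsimp only
  have : 0 ≤ S - a * y' := by linarith
  gcongr

theorem stmt_7_general (n k : ℕ) (hn : 2 ≤ n) (x : ℕ → ℝ)
    (hpos : ∀ i ∈ Finset.Icc 1 (n + 1), 0 < x i)
    (hpos' : ((k : ℝ) - 1) * x (n + 1) < ∑ i ∈ Finset.Icc 1 n, x i) :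
    ((k : ℝ) * ((∑ i ∈ Finset.Icc 1 n, x i) - ((k : ℝ) - 1) * x (n + 1)) ^ n /
        ∏ i ∈ Finset.Icc 1 n, x i ≥
      (k : ℝ) * (n : ℝ) ^ n *
        (((∑ i ∈ Finset.Icc 1 n, x i) - ((k : ℝ) - 1) * x (n + 1)) /
            (∑ i ∈ Finset.Icc 1 n, x i)) ^ n) ∧
    (2 ≤ k → ∀ y y' : ℝ, 0 < y → y < y' →
      ((k : ℝ) - 1) * y' < ∑ i ∈ Finset.Icc 1 n, x i →
      (k : ℝ) * (n : ℝ) ^ n *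
          (((∑ i ∈ Finset.Icc 1 n, x i) - ((k : ℝ) - 1) * y') /
              (∑ i ∈ Finset.Icc 1 n, x i)) ^ n <
        (k : ℝ) * (n : ℝ) ^ n *
          (((∑ i ∈ Finset.Icc 1 n, x i) - ((k : ℝ) - 1) * y) /
              (∑ i ∈ Finset.Icc 1 n, x i)) ^ n) := by
  have hcard : #(Icc 1 n) = n := by simp
  have hx : ∀ i ∈ Icc 1 n, 0 < x i := fun i hi ↦
    hpos i (Icc_subset_Icc_right n.le_succ hi)
  have hS : 0 < ∑ i ∈ Icc 1 n, x i := sum_pos hx (nonempty_Icc.mpr (by omega))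
  refine ⟨?_, fun hk y y' _ hlt hy' ↦ ?_⟩
  · simpa [hcard] using mul_card_pow_mul_div_sum_pow_le_div_prod (Icc 1 n) x hx
      (Nat.cast_nonneg k) (sub_nonneg.mpr hpos'.le)
  · have hk1 : (0 : ℝ) < k - 1 := by
      rw [sub_pos]
      exact_mod_cast hk
    exact strictAntiOn_mul_sub_mul_div_pow (by positivity) hk1 hS (by omega)
      (show ((k : ℝ) - 1) * y ≤ _ by nlinarith) hy'.le hlt

/-- Case `k·x_{n+1} ≤ 2 x_1` for the `A_{k−1}` singularity: with
`S = Σ_{i=1}^n x_i`, one has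
`k (S − (k−1) x_{n+1})^n / ∏_{i=1}^n x_i ≥ k n^n ((S − (k−1)x_{n+1})/S)^n`,
and (for `k ≥ 2`) the right-hand side is strictly decreasing in `x_{n+1}`. -/
theorem stmt_7 (n k : ℕ) (hn : 2 ≤ n) (hk : 1 ≤ k) (x : ℕ → ℝ)
    (hpos : ∀ i ∈ Finset.Icc 1 (n + 1), 0 < x i)
    (hmono : ∀ i j, 1 ≤ i → i ≤ j → j ≤ n → x i ≤ x j)
    (hcase : (k : ℝ) * x (n + 1) ≤ 2 * x 1)
    (hpos' : ((k : ℝ) - 1) * x (n + 1) < ∑ i ∈ Finset.Icc 1 n, x i) :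
    ((k : ℝ) * ((∑ i ∈ Finset.Icc 1 n, x i) - ((k : ℝ) - 1) * x (n + 1)) ^ n /
        ∏ i ∈ Finset.Icc 1 n, x i ≥
      (k : ℝ) * (n : ℝ) ^ n *
        (((∑ i ∈ Finset.Icc 1 n, x i) - ((k : ℝ) - 1) * x (n + 1)) /
            (∑ i ∈ Finset.Icc 1 n, x i)) ^ n) ∧
    (2 ≤ k → ∀ y y' : ℝ, 0 < y → y < y' →
      ((k : ℝ) - 1) * y' < ∑ i ∈ Finset.Icc 1 n, x i →
      (k : ℝ) * (n : ℝ) ^ n *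
          (((∑ i ∈ Finset.Icc 1 n, x i) - ((k : ℝ) - 1) * y') /
              (∑ i ∈ Finset.Icc 1 n, x i)) ^ n <
        (k : ℝ) * (n : ℝ) ^ n *
          (((∑ i ∈ Finset.Icc 1 n, x i) - ((k : ℝ) - 1) * y) /
              (∑ i ∈ Finset.Icc 1 n, x i)) ^ n) :=
  stmt_7_general n k hn x hpos hpos'
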